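/- For real matrices A ∈ ℝ^{m×n} and B ∈ ℝ^{n×l}, if A has orthonormal columns (AᵀA = I), then the Moore–Penrose pseudoinverse satisfies (AB)† = B†A†. -/

import Mathlib

open Matrix

/-- Moore–Penrose pseudoinverse predicate (the four Penrose conditions). -/
def IsMP {p q : ℕ} (A : Matrix (Fin p) (Fin q) ℝ) (X : Matrix (Fin q) (Fin p) ℝ) : Prop :=
  A * X * A = A ∧ X * A * X = X ∧ (A * X)ᵀ = A * X ∧ (X * A)ᵀ = X * A

/-- spectral (operator) norm of a matrix, induced by Euclidean vector norms. -/
noncomputable def specNorm {p q : ℕ} (A : Matrix (Fin p) (Fin q) ℝ) : ℝ :=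
  ‖LinearMap.toContinuousLinearMap (Matrix.toEuclideanLin A)‖

/-- Euclidean norm of a vector. -/
noncomputable def enorm {p : ℕ} (x : Fin p → ℝ) : ℝ :=
  ‖(WithLp.equiv 2 (Fin p → ℝ)).symm x‖

/-- the `i`-th largest singular value (0-indexed) of a real matrix. -/
noncomputable def sv {p q : ℕ} (A : Matrix (Fin p) (Fin q) ℝ) (i : Fin q) : ℝ :=
  Real.sqrt (((show (Aᵀ * A).IsHermitian by rw [Matrix.IsHermitian, Matrix.conjTranspose_eq_transpose_of_trivial, Matrix.transpose_mul, Matrix.transpose_transpose]).eigenvalues ∘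
    Tuple.sort (show (Aᵀ * A).IsHermitian by rw [Matrix.IsHermitian, Matrix.conjTranspose_eq_transpose_of_trivial, Matrix.transpose_mul, Matrix.transpose_transpose]).eigenvalues) i.rev)

/-! When `AᵀA = 1`, the pseudoinverse of `A` is forced to be `Aᵀ`. Then in each Penrose
condition for `(AB, B†Aᵀ)` the factor `AᵀA` in the middle cancels, leaving the corresponding
condition for `(B, B†)`, conjugated by `A` where necessary. -/

section OrthonormalColumns

variable {m n : ℕ} {A : Matrix (Fin m) (Fin n) ℝ}

theorem transpose_mul_mul_cancel {k : ℕ} (horth : Aᵀ * A = 1) (X : Matrix (Fin n) (Fin k) ℝ) :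
    Aᵀ * (A * X) = X := by
  rw [← Matrix.mul_assoc, horth, Matrix.one_mul]

theorem IsMP.eq_transpose_of_transpose_mul_self {X : Matrix (Fin n) (Fin m) ℝ} (hX : IsMP A X)
    (horth : Aᵀ * A = 1) : X = Aᵀ := by
  obtain ⟨hAXA, -, hAX, -⟩ := hX
  calc X = Aᵀ * (A * X) := (transpose_mul_mul_cancel horth X).symm
    _ = Aᵀ * (A * X)ᵀ := by rw [hAX]
    _ = (A * X * A)ᵀ := by rw [transpose_mul (A * X) A]
    _ = Aᵀ := by rw [hAXA]

theorem isMP_mul_transpose_of_transpose_mul_self {l : ℕ} {B : Matrix (Fin n) (Fin l) ℝ}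
    {Bd : Matrix (Fin l) (Fin n) ℝ} (horth : Aᵀ * A = 1) (hB : IsMP B Bd) :
    IsMP (A * B) (Bd * Aᵀ) := by
  obtain ⟨hBBdB, hBdBBd, hBBd, hBdB⟩ := hB
  have hcancel : Bd * Aᵀ * (A * B) = Bd * B := by
    rw [Matrix.mul_assoc, transpose_mul_mul_cancel horth]
  refine ⟨?_, ?_, ?_, ?_⟩
  · calc A * B * (Bd * Aᵀ) * (A * B) = A * (B * (Bd * Aᵀ * (A * B))) := by
          simp only [Matrix.mul_assoc]
      _ = A * B := by rw [hcancel, ← Matrix.mul_assoc B, hBBdB]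
  · rw [hcancel, ← Matrix.mul_assoc, hBdBBd]
  · calc (A * B * (Bd * Aᵀ))ᵀ = A * (B * Bd)ᵀ * Aᵀ := by
          simp only [transpose_mul, transpose_transpose, Matrix.mul_assoc]
      _ = A * B * (Bd * Aᵀ) := by rw [hBBd]; simp only [Matrix.mul_assoc]
  · rw [hcancel, hBdB]

end OrthonormalColumns

/-- If `A` has orthonormal columns, then `(AB)† = B†A†`. -/
theorem stmt0 {m n l : ℕ} (A : Matrix (Fin m) (Fin n) ℝ) (B : Matrix (Fin n) (Fin l) ℝ)
    (Ad : Matrix (Fin n) (Fin m) ℝ) (Bd : Matrix (Fin l) (Fin n) ℝ)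
    (hA : IsMP A Ad) (hB : IsMP B Bd) (horth : Aᵀ * A = 1) :
    IsMP (A * B) (Bd * Ad) := by
  rw [hA.eq_transpose_of_transpose_mul_self horth]
  exact isMP_mul_transpose_of_transpose_mul_self horth hB
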